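/- Null vertical projections of the interface: let X be a (1,2)-cluster in ℝ^n = ℝ^{n-1}×ℝ, and let F⊂ℝ^{n-1} be a Borel set with H^{n-1}(ℝ^{n-1}∖F)=0 along which the slicing properties hold, in particular such that ν_{X(2)}(x̄,t)·e_n ≠ 0 for every x̄∈F and every t∈[∂*X(2)]_x̄. Then for every Borel set G⊂F with H^{n-1}(G)=0, one has H^{n-1}( X(2,3) ∩ (G×ℝ) ) = 0. -/

import Mathlib

/-!
Near a point `p` of the reduced boundary of `E`, the set `E` is close in measure to the
halfspace bounded by the tangent plane `ν(p)ᗮ`; hence the nearby points at which both `E` and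
its complement have density bounded below lie in a thin double cone around that plane. Sorting
the points of `S = X(2,3) ∩ (G × ℝ)` by a lower bound on `|ν·e_n|`, a density scale and the
radius of validity of the cone estimate, `S` becomes a countable union of pieces on each of
which the vertical projection has a Lipschitz inverse. Each piece is therefore a Lipschitz
image of a subset of the `H^n`-null set `G`.
-/

open MeasureTheory Metric Set Filter Topology
open scoped ENNReal NNReal

noncomputable section

/-- `n`-dimensional Euclidean space. -/
abbrev Rn (n : ℕ) : Type := EuclideanSpace ℝ (Fin n)

section GMT

variable {V : Type*} [NormedAddCommGroup V] [InnerProductSpace ℝ V] [MeasureSpace V]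

/-- The Lebesgue density of `E` at `x` equals `t`. -/
def DensityAt (E : Set V) (x : V) (t : ℝ≥0∞) : Prop :=
  Tendsto (fun r : ℝ => volume (E ∩ ball x r) / volume (ball x r)) (𝓝[>] 0) (𝓝 t)

/-- The set of points of Lebesgue density `t` of `E`. -/
def densPts (E : Set V) (t : ℝ≥0∞) : Set V := {x | DensityAt E x t}

/-- The essential (measure-theoretic) boundary of `E`. -/
def essBdry (E : Set V) : Set V := {x | ¬ DensityAt E x 1 ∧ ¬ DensityAt E x 0}

/-- `ν` is the measure-theoretic outer unit normal of `E` at `x` in the sense of De Giorgi: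
`ν` is a unit vector and the blow-ups of `E` at `x` converge locally in measure to the
halfspace `{y | ⟪y, ν⟫ < 0}`. -/
def IsMTNormal (E : Set V) (x ν : V) : Prop :=
  ‖ν‖ = 1 ∧ ∀ R : ℝ, 0 < R →
    Tendsto (fun r : ℝ =>
        volume ((symmDiff {y : V | x + r • y ∈ E} {y : V | (inner ℝ y ν : ℝ) < 0}) ∩ ball 0 R))
      (𝓝[>] 0) (𝓝 0)

/-- The reduced boundary of `E`: the set of points admitting a measure-theoretic
outer unit normal. -/
def redBdry (E : Set V) : Set V := {x | ∃ ν : V, IsMTNormal E x ν}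

/-- The measure-theoretic outer unit normal of `E` (defaulting to `0` where undefined). -/
def mtNormal (E : Set V) (x : V) : V :=
  letI := Classical.propDecidable (∃ ν : V, IsMTNormal E x ν)
  if h : ∃ ν : V, IsMTNormal E x ν then h.choose else 0

variable [BorelSpace V]

/-- The relative perimeter of `E` in `B`, where `d` is the Hausdorff dimension of the
boundary: `P(E;B) = H^d(∂*E ∩ B)`. -/
def perimD (d : ℝ) (E B : Set V) : ℝ≥0∞ := μH[d] (redBdry E ∩ B)

/-- `E` is a set of locally finite perimeter (with boundary dimension `d`): `E` is
measurable and its essential boundary has locally finite `H^d`-measure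
(Federer's criterion). -/
def HasLocFinPerimD (d : ℝ) (E : Set V) : Prop :=
  MeasurableSet E ∧ ∀ R : ℝ, μH[d] (essBdry E ∩ ball 0 R) < ⊤

end GMT

/-- Relative perimeter in `ℝ^n`. -/
def perim {n : ℕ} (E B : Set (Rn n)) : ℝ≥0∞ := perimD ((n : ℝ) - 1) E B

/-- Sets of locally finite perimeter in `ℝ^n`. -/
def HasLocFinPerim {n : ℕ} (E : Set (Rn n)) : Prop := HasLocFinPerimD ((n : ℝ) - 1) E

/-- An `(N,M)`-cluster in `ℝ^n`: `N+M` sets of locally finite perimeter, pairwise disjoint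
up to Lebesgue null sets, covering `ℝ^n` up to a Lebesgue null set; the first `N` chambers
(the proper ones) have positive finite volume, the last `M` (the improper ones) have
infinite volume. (Chambers are indexed by `0,…,N+M-1`.) -/
structure Cluster (n N M : ℕ) where
  X : Fin (N + M) → Set (Rn n)
  locFinPerim : ∀ j, HasLocFinPerim (X j)
  ae_disjoint : ∀ j k, j ≠ k → volume (X j ∩ X k) = 0
  ae_covers : volume ((univ : Set (Rn n)) \ ⋃ j, X j) = 0
  proper_vol : ∀ j : Fin (N + M), (j : ℕ) < N → 0 < volume (X j) ∧ volume (X j) < ⊤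
  improper_vol : ∀ j : Fin (N + M), N ≤ (j : ℕ) → volume (X j) = ⊤

/-- The interface between chambers `j` and `k` of a cluster. -/
def Cluster.interface {n N M : ℕ} (X : Cluster n N M) (j k : Fin (N + M)) : Set (Rn n) :=
  redBdry (X.X j) ∩ redBdry (X.X k)

/-- The `c`-weighted perimeter of the cluster `X` relative to `B`:
`P_c(X;B) = ∑_{j<k} c_jk H^{n-1}(X(j,k) ∩ B)`. -/
def clusterEnergy {n N M : ℕ} (c : Fin (N + M) → Fin (N + M) → ℝ) (X : Cluster n N M)
    (B : Set (Rn n)) : ℝ≥0∞ :=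
  ∑ j : Fin (N + M), ∑ k : Fin (N + M),
    if j < k then ENNReal.ofReal (c j k) * μH[(n : ℝ) - 1] (X.interface j k ∩ B) else 0

/-- `A` is compactly contained in `B`. -/
def CptIn {α : Type*} [TopologicalSpace α] (A B : Set α) : Prop :=
  IsCompact (closure A) ∧ closure A ⊆ B

/-- `X` is a `c`-locally minimizing cluster: its chambers are normalized
(`cl ∂*X(j) = ∂X(j)`), and for every `r > 0` it minimizes `P_c(·; B_r(0))` among clusters
with the same volume vector whose chambers differ from those of `X` by sets compactly
contained in `B_r(0)`. -/
def IsLocallyMinimizing {n N M : ℕ} (c : Fin (N + M) → Fin (N + M) → ℝ)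
    (X : Cluster n N M) : Prop :=
  (∀ j, closure (redBdry (X.X j)) = frontier (X.X j)) ∧
  ∀ r : ℝ, 0 < r → ∀ X' : Cluster n N M,
    (∀ j, volume (X'.X j) = volume (X.X j)) →
    (∀ j, CptIn (symmDiff (X.X j) (X'.X j)) (ball (0 : Rn n) r)) →
    clusterEnergy c X (ball 0 r) ≤ clusterEnergy c X' (ball 0 r)

/-- The weight family of a three-chamber cluster determined by `c12, c13, c23`. -/
def w3 (c12 c13 c23 : ℝ) : Fin 3 → Fin 3 → ℝ := fun j k =>
  if (j = 0 ∧ k = 1) ∨ (j = 1 ∧ k = 0) then c12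
  else if (j = 0 ∧ k = 2) ∨ (j = 2 ∧ k = 0) then c13
  else if (j = 1 ∧ k = 2) ∨ (j = 2 ∧ k = 1) then c23
  else 0

/-- The positivity condition (pos.) on the weights. -/
def PosWeights (c12 c13 c23 : ℝ) : Prop := 0 < c12 ∧ 0 < c13 ∧ 0 < c23

/-- The strict triangle inequalities (△-ineq.) on the weights. -/
def TriangleIneq (c12 c13 c23 : ℝ) : Prop :=
  c12 < c13 + c23 ∧ c13 < c12 + c23 ∧ c23 < c12 + c13

/-- The cluster `X` has density `Θ` at infinity: `P_c(X;B_r(0))/r^{n-1} → Θ` as `r → ∞`. -/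
def HasDensityAtInfinity {n N M : ℕ} (c : Fin (N + M) → Fin (N + M) → ℝ)
    (X : Cluster n N M) (Θ : ℝ≥0∞) : Prop :=
  Tendsto (fun r : ℝ => clusterEnergy c X (ball 0 r) / ENNReal.ofReal (r ^ (n - 1)))
    atTop (𝓝 Θ)


/-! ### Vertical decomposition `ℝ^{n+1} = ℝ^n × ℝ` and related constructions -/

/-- The vertical (last) coordinate of a point of `ℝ^{n+1}`. -/
def vert {n : ℕ} (x : Rn (n + 1)) : ℝ := x (Fin.last n)

/-- The vertical unit vector `e_{n+1}` of `ℝ^{n+1}`. -/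
def eVert (n : ℕ) : Rn (n + 1) := EuclideanSpace.single (Fin.last n) (1 : ℝ)

/-- The open upper halfspace `{x_{n+1} > 0}`. -/
def upperHS (n : ℕ) : Set (Rn (n + 1)) := {x | 0 < vert x}

/-- The open lower halfspace `{x_{n+1} < 0}`. -/
def lowerHS (n : ℕ) : Set (Rn (n + 1)) := {x | vert x < 0}

/-- The horizontal hyperplane `{x_{n+1} = 0}`. -/
def horizPlane (n : ℕ) : Set (Rn (n + 1)) := {x | vert x = 0}

/-- The horizontal projection `ℝ^{n+1} → ℝ^n`. -/
def hproj {n : ℕ} (x : Rn (n + 1)) : Rn n :=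
  (EuclideanSpace.equiv (Fin n) ℝ).symm (fun i => x (Fin.castSucc i))

/-- The point of `ℝ^{n+1}` with horizontal part `x` and vertical part `y`. -/
def vcons {n : ℕ} (x : Rn n) (y : ℝ) : Rn (n + 1) :=
  (EuclideanSpace.equiv (Fin (n + 1)) ℝ).symm (Fin.snoc (EuclideanSpace.equiv (Fin n) ℝ x) y)

/-- The one-dimensional vertical slice `E_x̄ = {y ∈ ℝ : (x̄,y) ∈ E}`. -/
def vslice {n : ℕ} (E : Set (Rn (n + 1))) (x : Rn n) : Set ℝ := {y | vcons x y ∈ E}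

/-- The open infinite vertical cylinder `C_r` of radius `r`. -/
def Cyl (n : ℕ) (r : ℝ) : Set (Rn (n + 1)) := {x | ‖hproj x‖ < r}

/-- The Steiner symmetral of `E` over the hyperplane `{x_{n+1} = 0}`:
`E^S = {(x̄,y) : H¹(E_x̄) > 0, |y| < H¹(E_x̄)/2}`. -/
def steinerSymm {n : ℕ} (E : Set (Rn (n + 1))) : Set (Rn (n + 1)) :=
  {p | 0 < volume (vslice E (hproj p)) ∧
       ENNReal.ofReal (2 * |vert p|) < volume (vslice E (hproj p))}

/-- The set `E(X)` of horizontal points over which the slice of `E` is `H¹`-null. -/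
def zeroSlices {n : ℕ} (E : Set (Rn (n + 1))) : Set (Rn n) :=
  {x | volume (vslice E x) = 0}

/-- The reflection of `ℝ^{n+1}` over the hyperplane `{x_{n+1} = 0}`. -/
def vreflect {n : ℕ} (x : Rn (n + 1)) : Rn (n + 1) :=
  (EuclideanSpace.equiv (Fin (n + 1)) ℝ).symm (fun i => if i = Fin.last n then -(x i) else x i)

/-- The liquid drop (Gauss free) energy `F_β(E;H) = P(E;H) - β P(E;∂H)` in the upper
halfspace `H = {x_{n+1} > 0}`. -/
def liquidDrop {n : ℕ} (β : ℝ) (E : Set (Rn (n + 1))) : ℝ :=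
  (perim E (upperHS n)).toReal - β * (perim E (horizPlane n)).toReal

/-- The weighted interfacial energy of a triple of chambers relative to `B`. -/
def tripleEnergy {n : ℕ} (c12 c13 c23 : ℝ) (A₁ A₂ A₃ B : Set (Rn n)) : ℝ≥0∞ :=
  ENNReal.ofReal c12 * μH[(n : ℝ) - 1] (redBdry A₁ ∩ redBdry A₂ ∩ B)
    + ENNReal.ofReal c13 * μH[(n : ℝ) - 1] (redBdry A₁ ∩ redBdry A₃ ∩ B)
    + ENNReal.ofReal c23 * μH[(n : ℝ) - 1] (redBdry A₂ ∩ redBdry A₃ ∩ B)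

/-! ### The standard weighted lens cluster and double bubble -/

/-- The open ball in `ℝ^{n+1}` with center `t e_{n+1}` on the vertical axis whose boundary
sphere passes through the sphere of radius `rD` in the hyperplane `{x_{n+1} = 0}`. -/
def capBall {n : ℕ} (rD t : ℝ) : Set (Rn (n + 1)) :=
  ball (t • eVert n) (Real.sqrt (rD ^ 2 + t ^ 2))

/-- The corresponding closed ball. -/
def capClosedBall {n : ℕ} (rD t : ℝ) : Set (Rn (n + 1)) :=
  closedBall (t • eVert n) (Real.sqrt (rD ^ 2 + t ^ 2))

/-- The angle at the common boundary sphere between the hyperplane `{x_{n+1} = 0}` and an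
*upper* spherical cap through that sphere (cap with center at height `t`), measured inside
the region above the plane and outside the cap. -/
def capAngleUp (rD t : ℝ) : ℝ := Real.arccos (t / Real.sqrt (rD ^ 2 + t ^ 2))

/-- As `capAngleUp`, for a *lower* spherical cap (by reflection). -/
def capAngleDown (rD t : ℝ) : ℝ := Real.arccos (-t / Real.sqrt (rD ^ 2 + t ^ 2))

/-- The lens chamber `X_lens(1)`: the region enclosed by the upper cap (center height `t₂`)
and the lower cap (center height `t₃`), both passing through the sphere of radius `rD` in
`{x_{n+1} = 0}`. -/
def lensChamber1 {n : ℕ} (rD t₂ t₃ : ℝ) : Set (Rn (n + 1)) :=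
  (capBall rD t₂ ∩ {x | 0 ≤ vert x}) ∪ (capBall rD t₃ ∩ {x | vert x ≤ 0})

/-- The lens chamber `X_lens(2)`: the part of the upper halfspace outside the upper cap. -/
def lensChamber2 {n : ℕ} (rD t₂ : ℝ) : Set (Rn (n + 1)) :=
  upperHS n \ capClosedBall rD t₂

/-- The lens chamber `X_lens(3)`: the part of the lower halfspace outside the lower cap. -/
def lensChamber3 {n : ℕ} (rD t₃ : ℝ) : Set (Rn (n + 1)) :=
  lowerHS n \ capClosedBall rD t₃

/-- The angle conditions defining the standard weighted lens cluster: with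
`θ₂ = capAngleUp rD t₂`, `θ₃ = capAngleDown rD t₃` (the angles of chambers 2 and 3 at the
common boundary sphere, automatically in `(0,π)`), and `θ₁ = 2π - θ₂ - θ₃` the angle of
chamber 1, one has `θ₁ ∈ (0,π)` and `sin θ₁ / c23 = sin θ₂ / c13 = sin θ₃ / c12`. -/
def LensCond (c12 c13 c23 rD t₂ t₃ : ℝ) : Prop :=
  0 < rD ∧
  (2 * Real.pi - capAngleUp rD t₂ - capAngleDown rD t₃) ∈ Ioo 0 Real.pi ∧
  Real.sin (2 * Real.pi - capAngleUp rD t₂ - capAngleDown rD t₃) / c23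
    = Real.sin (capAngleUp rD t₂) / c13 ∧
  Real.sin (capAngleUp rD t₂) / c13 = Real.sin (capAngleDown rD t₃) / c12

/-- `X` is the standard weighted lens cluster for the weights `c12, c13, c23`:
its chambers are the model lens chambers, for parameters satisfying the angle conditions,
with `|X(1)| = 1`. -/
def IsStandardLens {n : ℕ} (c12 c13 c23 : ℝ) (X : Cluster (n + 1) 1 2) : Prop :=
  ∃ rD t₂ t₃ : ℝ, LensCond c12 c13 c23 rD t₂ t₃ ∧
    volume (lensChamber1 (n := n) rD t₂ t₃) = 1 ∧
    X.X 0 = lensChamber1 rD t₂ t₃ ∧ X.X 1 = lensChamber2 rD t₂ ∧ X.X 2 = lensChamber3 rD t₃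

/-- The angle conditions of the standard weighted double bubble: three spherical caps
through the common sphere of radius `rD` in `{x_{n+1}=0}` (the cap between chambers 1,2
with center height `t12`, between 1,3 with center height `t13`, between 2,3 with center
height `t23`), meeting at angles `θ₁, θ₂, θ₃ ∈ (0,π)` with `θ₁+θ₂+θ₃ = 2π` and
`sin θ₁/c23 = sin θ₂/c13 = sin θ₃/c12`. -/
def BubCond (c12 c13 c23 rD t12 t13 t23 : ℝ) : Prop :=
  0 < rD ∧
  (2 * Real.pi - capAngleUp rD t12 - capAngleDown rD t13) ∈ Ioo 0 Real.pi ∧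
  (capAngleUp rD t12 - capAngleUp rD t23) ∈ Ioo 0 Real.pi ∧
  (capAngleUp rD t23 + capAngleDown rD t13) ∈ Ioo 0 Real.pi ∧
  Real.sin (2 * Real.pi - capAngleUp rD t12 - capAngleDown rD t13) / c23
    = Real.sin (capAngleUp rD t12 - capAngleUp rD t23) / c13 ∧
  Real.sin (capAngleUp rD t12 - capAngleUp rD t23) / c13
    = Real.sin (capAngleUp rD t23 + capAngleDown rD t13) / c12

/-- Chamber 1 of the standard weighted double bubble. -/
def bubChamber1 {n : ℕ} (rD t12 t13 : ℝ) : Set (Rn (n + 1)) := lensChamber1 rD t12 t13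

/-- Chamber 2 of the standard weighted double bubble: inside the outer upper cap, above the
plane, outside the cap separating chambers 1 and 2. -/
def bubChamber2 {n : ℕ} (rD t12 t23 : ℝ) : Set (Rn (n + 1)) :=
  (capBall rD t23 ∩ upperHS n) \ capClosedBall rD t12

/-- Chamber 3 (the improper chamber) of the standard weighted double bubble. -/
def bubChamber3 {n : ℕ} (rD t13 t23 : ℝ) : Set (Rn (n + 1)) :=
  {x | (0 ≤ vert x ∧ x ∉ capClosedBall rD t23) ∨ (vert x ≤ 0 ∧ x ∉ capClosedBall rD t13)}

/-- `u` is a (smooth) solution of the minimal surface equation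
`div (∇u / √(1+|∇u|²)) = 0` on `Ω`. -/
def SolvesMSE {n : ℕ} (u : Rn n → ℝ) (Ω : Set (Rn n)) : Prop :=
  ContDiffOn ℝ (⊤ : ℕ∞) u Ω ∧ ∀ x ∈ Ω,
    (∑ i : Fin n,
      fderiv ℝ (fun y => (Real.sqrt (1 + ‖gradient u y‖ ^ 2))⁻¹ • gradient u y) x
        (EuclideanSpace.single i 1) i) = 0

open scoped RealInnerProductSpace

section ConeGeometry

variable {V : Type*} [NormedAddCommGroup V] [InnerProductSpace ℝ V]

lemma norm_le_of_abs_inner_le {u ν e : V} (he : ‖e‖ = 1) (hν : ‖ν‖ = 1) {α : ℝ} (hα : 0 < α)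
    (hνe : α ≤ |⟪ν, e⟫|) (hu : |⟪u, ν⟫| ≤ α / 2 * ‖u‖) :
    ‖u‖ ≤ (2 + 2 / α) * ‖u - ⟪u, e⟫ • e‖ := by
  set b := ⟪u, e⟫
  set H := ‖u - b • e‖
  have hub : ‖u‖ ≤ H + |b| :=
    calc ‖u‖ = ‖(u - b • e) + b • e‖ := by rw [sub_add_cancel]
      _ ≤ H + ‖b • e‖ := norm_add_le _ _
      _ = H + |b| := by rw [norm_smul, he, mul_one, Real.norm_eq_abs]
  have hperp : |⟪u - b • e, ν⟫| ≤ H := by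
    simpa [hν] using abs_real_inner_le_norm (u - b • e) ν
  have hsplit : b * ⟪ν, e⟫ = ⟪u, ν⟫ - ⟪u - b • e, ν⟫ := by
    rw [inner_sub_left, real_inner_smul_left, real_inner_comm ν e]
    ring
  have hb : α * |b| ≤ α / 2 * ‖u‖ + H :=
    calc α * |b| ≤ |b| * |⟪ν, e⟫| := by nlinarith [abs_nonneg b]
      _ = |⟪u, ν⟫ - ⟪u - b • e, ν⟫| := by rw [← abs_mul, hsplit]
      _ ≤ |⟪u, ν⟫| + |⟪u - b • e, ν⟫| := abs_sub _ _
      _ ≤ α / 2 * ‖u‖ + H := add_le_add hu hperp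
  rw [show (2 + 2 / α) * H = (2 * α + 2) * H / α by field_simp, le_div_iff₀ hα]
  nlinarith

def halfspace (p ν : V) : Set V := {x | ⟪x - p, ν⟫ < 0}

lemma ball_sub_smul_subset_halfspace {p ν : V} (hν : ‖ν‖ = 1) (r : ℝ) :
    ball (p - r • ν) r ⊆ halfspace p ν := by
  intro x hx
  rw [mem_ball, dist_eq_norm] at hx
  have h := (abs_le.1 (abs_real_inner_le_norm (x - (p - r • ν)) ν)).2
  have hνν : ⟪ν, ν⟫ = 1 := by rw [real_inner_self_eq_norm_sq, hν, one_pow]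
  have hdecomp : ⟪x - p, ν⟫ = ⟪x - (p - r • ν), ν⟫ - r := by
    rw [show x - (p - r • ν) = (x - p) + r • ν by abel, inner_add_left, real_inner_smul_left,
      hνν]
    ring
  show ⟪x - p, ν⟫ < 0
  rw [hν, mul_one] at h
  linarith

lemma ball_add_smul_subset_compl_halfspace {p ν : V} (hν : ‖ν‖ = 1) (r : ℝ) :
    ball (p + r • ν) r ⊆ (halfspace p ν)ᶜ := by
  intro x hx hxH
  have hx' : x ∈ halfspace p (-ν) := by
    apply ball_sub_smul_subset_halfspace (by rwa [norm_neg]) r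
    rwa [smul_neg, sub_neg_eq_add]
  simp only [halfspace, mem_ofPred_eq, inner_neg_right] at hx' hxH
  linarith

lemma ball_subset_halfspace_or_compl {p q ν : V} (hν : ‖ν‖ = 1) {t : ℝ}
    (ht : t ≤ |⟪q - p, ν⟫|) :
    ball q t ⊆ halfspace p ν ∨ ball q t ⊆ (halfspace p ν)ᶜ := by
  have hnear : ∀ x ∈ ball q t, |⟪x - q, ν⟫| < t := fun x hx => by
    have := abs_real_inner_le_norm (x - q) ν
    rw [hν, mul_one, ← dist_eq_norm] at this
    exact this.trans_lt hx
  have hdecomp : ∀ x, ⟪x - p, ν⟫ = ⟪q - p, ν⟫ + ⟪x - q, ν⟫ := fun x => by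
    rw [← inner_add_left, sub_add_sub_cancel']
  rcases le_abs'.1 ht with hneg | hpos
  · left
    intro x hx
    have := (abs_lt.1 (hnear x hx)).2
    show ⟪x - p, ν⟫ < 0
    linarith [hdecomp x]
  · right
    intro x hx hxH
    have := (abs_lt.1 (hnear x hx)).1
    have hxH' : ⟪x - p, ν⟫ < 0 := hxH
    linarith [hdecomp x]

lemma blowup_symmDiff_halfspace (E : Set V) (p ν : V) {r : ℝ} (hr : 0 < r) :
    symmDiff {y | p + r • y ∈ E} {y | ⟪y, ν⟫ < 0}
      = {y | p + r • y ∈ symmDiff E (halfspace p ν)} := by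
  ext y
  simp only [Set.mem_symmDiff, mem_ofPred_eq, halfspace, add_sub_cancel_left, real_inner_smul_left,
    mul_neg_iff, hr, hr.not_gt, true_and, false_and, or_false]

end ConeGeometry

/-- A ball of radius `t / 2` fits on either side of a hyperplane through `q` inside
`ball q t`; at reduced-boundary points, `E` and `Eᶜ` eventually fill half of it. -/
def densityConst (V : Type*) [NormedAddCommGroup V] [MeasureSpace V] : ℝ≥0∞ :=
  volume (ball (0 : V) 2⁻¹) / 2

lemma densityConst_pos {V : Type*} [NormedAddCommGroup V] [MeasureSpace V]
    [(volume : Measure V).IsAddHaarMeasure] : 0 < densityConst V :=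
  ENNReal.div_pos (measure_ball_pos _ _ (by norm_num)).ne' ENNReal.ofNat_ne_top

section Density

variable {V : Type*} [NormedAddCommGroup V] [InnerProductSpace ℝ V] [MeasureSpace V]

def HasTwoSidedDensityBound (E : Set V) (ρ : ℝ) (q : V) : Prop :=
  ∀ t, 0 < t → t ≤ ρ →
    ENNReal.ofReal (t ^ Module.finrank ℝ V) * densityConst V ≤ volume (E ∩ ball q t) ∧
    ENNReal.ofReal (t ^ Module.finrank ℝ V) * densityConst V ≤ volume (Eᶜ ∩ ball q t)

lemma HasTwoSidedDensityBound.mono {E : Set V} {ρ ρ' : ℝ} {q : V}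
    (h : HasTwoSidedDensityBound E ρ q) (hρ : ρ' ≤ ρ) : HasTwoSidedDensityBound E ρ' q :=
  fun t ht htρ => h t ht (htρ.trans hρ)

variable [FiniteDimensional ℝ V] [BorelSpace V] [(volume : Measure V).IsAddHaarMeasure]

lemma measure_inter_ball_eq_blowup (p : V) {r : ℝ} (hr : 0 < r) (A : Set V) (R : ℝ) :
    volume (A ∩ ball p (r * R))
      = ENNReal.ofReal (r ^ Module.finrank ℝ V) * volume ({y | p + r • y ∈ A} ∩ ball 0 R) := by
  have hset : {y | p + r • y ∈ A} ∩ ball 0 R = (r • ·) ⁻¹' ((p + ·) ⁻¹' (A ∩ ball p (r * R))) := by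
    ext y
    simp only [mem_inter_iff, mem_preimage, mem_ofPred_eq, mem_ball, dist_self_add_left,
      norm_smul, Real.norm_eq_abs, abs_of_pos hr, dist_zero_right, mul_lt_mul_iff_right₀ hr]
  rw [hset, Measure.addHaar_preimage_smul volume hr.ne', measure_preimage_add, ← mul_assoc,
    ← ENNReal.ofReal_mul (by positivity), abs_of_pos (by positivity),
    mul_inv_cancel₀ (by positivity), ENNReal.ofReal_one, one_mul]

lemma IsMTNormal.eventually_measure_symmDiff_lt {E : Set V} {p ν : V} (h : IsMTNormal E p ν)
    {R : ℝ} (hR : 0 < R) {η : ℝ≥0∞} (hη : 0 < η) :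
    ∀ᶠ r in 𝓝[>] 0, volume (symmDiff E (halfspace p ν) ∩ ball p (r * R))
      < ENNReal.ofReal (r ^ Module.finrank ℝ V) * η := by
  filter_upwards [(h.2 R hR).eventually_lt_const hη, self_mem_nhdsWithin] with r hr hr0
  rw [measure_inter_ball_eq_blowup p hr0, ← blowup_symmDiff_halfspace E p ν hr0]
  exact ENNReal.mul_lt_mul_right (ENNReal.ofReal_pos.2 (pow_pos hr0 _)).ne' ENNReal.ofReal_ne_top hr

lemma le_measure_inter_ball_of_ball_subset {E H : Set V} {p z : V} {t : ℝ} (ht : 0 < t)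
    (hz : ball z (t * 2⁻¹) ⊆ H ∩ ball p t)
    (hΔ : volume (symmDiff E H ∩ ball p t)
      < ENNReal.ofReal (t ^ Module.finrank ℝ V) * densityConst V) :
    ENNReal.ofReal (t ^ Module.finrank ℝ V) * densityConst V ≤ volume (E ∩ ball p t) := by
  set a := ENNReal.ofReal (t ^ Module.finrank ℝ V) * volume (ball (0 : V) 2⁻¹)
  have ha : a ≠ ⊤ := ENNReal.mul_ne_top ENNReal.ofReal_ne_top measure_ball_lt_top.ne
  have hcover : H ∩ ball p t ⊆ (E ∩ ball p t) ∪ (symmDiff E H ∩ ball p t) := by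
    rintro x ⟨hxH, hxB⟩
    by_cases hxE : x ∈ E
    · exact Or.inl ⟨hxE, hxB⟩
    · exact Or.inr ⟨Set.mem_symmDiff.2 (Or.inr ⟨hxH, hxE⟩), hxB⟩
  have hsum : a ≤ volume (E ∩ ball p t) + a / 2 :=
    calc a = volume (ball z (t * 2⁻¹)) := (Measure.addHaar_ball_mul_of_pos _ _ ht _).symm
      _ ≤ volume (H ∩ ball p t) := measure_mono hz
      _ ≤ volume (E ∩ ball p t) + volume (symmDiff E H ∩ ball p t) :=
          (measure_mono hcover).trans (measure_union_le _ _)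
      _ ≤ volume (E ∩ ball p t) + a / 2 := by
          gcongr
          rw [mul_div_assoc]
          exact hΔ.le
  have := tsub_le_iff_right.2 hsum
  rwa [ENNReal.sub_half ha, mul_div_assoc] at this

lemma IsMTNormal.exists_hasTwoSidedDensityBound {E : Set V} {q ν : V} (h : IsMTNormal E q ν) :
    ∃ ρ > 0, HasTwoSidedDensityBound E ρ q := by
  obtain ⟨δ, hδ, hsub⟩ := mem_nhdsGT_iff_exists_Ioo_subset.1
    (h.eventually_measure_symmDiff_lt one_pos (densityConst_pos (V := V)))
  refine ⟨δ / 2, half_pos hδ, fun t ht htδ => ?_⟩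
  have hΔ := hsub ⟨ht, by linarith⟩
  simp only [mem_ofPred_eq, mul_one] at hΔ
  have hball : ∀ z, dist z q = t * 2⁻¹ → ball z (t * 2⁻¹) ⊆ ball q t := fun z hz =>
    ball_subset_ball' (by linarith)
  have hdist : ‖(t * 2⁻¹) • ν‖ = t * 2⁻¹ := by
    rw [norm_smul, h.1, mul_one, Real.norm_of_nonneg (by positivity)]
  constructor
  · refine le_measure_inter_ball_of_ball_subset ht
      (subset_inter (ball_sub_smul_subset_halfspace h.1 _) (hball _ ?_)) hΔ
    rw [dist_eq_norm, sub_sub_cancel_left, norm_neg, hdist]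
  · rw [← compl_symmDiff_compl] at hΔ
    refine le_measure_inter_ball_of_ball_subset ht
      (subset_inter (ball_add_smul_subset_compl_halfspace h.1 _) (hball _ ?_)) hΔ
    rw [dist_eq_norm, add_sub_cancel_left, hdist]

/-- For `q` outside the cone, `ball q (ε‖q - p‖)` lies on one side of the tangent plane, so the
two-sided density at `q` contradicts the smallness of `E ∆ halfspace p ν` in
`ball p (2‖q - p‖)`. -/
lemma IsMTNormal.exists_abs_inner_le {E : Set V} {p ν : V} (h : IsMTNormal E p ν) {ρ ε : ℝ}
    (hρ : 0 < ρ) (hε : 0 < ε) (hε1 : ε ≤ 1) :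
    ∃ δ > 0, ∀ q, HasTwoSidedDensityBound E ρ q → dist q p < δ →
      |⟪q - p, ν⟫| ≤ ε * ‖q - p‖ := by
  set d := Module.finrank ℝ V
  obtain ⟨δ, hδ, hsub⟩ := mem_nhdsGT_iff_exists_Ioo_subset.1
    (h.eventually_measure_symmDiff_lt two_pos
      (ENNReal.mul_pos (densityConst_pos (V := V)).ne' (ENNReal.ofReal_pos.2 (pow_pos hε d)).ne'))
  refine ⟨min δ (ρ / ε), lt_min hδ (div_pos hρ hε), fun q hq hqp => ?_⟩
  set s := ‖q - p‖
  rw [dist_eq_norm, lt_min_iff, lt_div_iff₀ hε] at hqp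
  by_contra! hcone
  have hs : 0 < s := by
    refine norm_pos_iff.2 fun hqp0 => ?_
    rw [hqp0, inner_zero_left, abs_zero] at hcone
    exact (mul_nonneg hε.le (norm_nonneg _)).not_gt hcone
  set t := ε * s
  have ht : 0 < t := mul_pos hε hs
  have hqt : ball q t ⊆ ball p (s * 2) :=
    ball_subset_ball' (by rw [dist_eq_norm]; nlinarith)
  have hΔ := hsub ⟨hs, hqp.1⟩
  simp only [mem_ofPred_eq] at hΔ
  have hlow : ENNReal.ofReal (t ^ d) * densityConst V
      ≤ volume (symmDiff E (halfspace p ν) ∩ ball p (s * 2)) := by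
    obtain ⟨hE, hEc⟩ := hq t ht (by linarith [hqp.2])
    rcases ball_subset_halfspace_or_compl h.1 hcone.le with hH | hH
    · refine hEc.trans (measure_mono fun x ⟨hxE, hxq⟩ => ⟨?_, hqt hxq⟩)
      exact Set.mem_symmDiff.2 (Or.inr ⟨hH hxq, hxE⟩)
    · refine hE.trans (measure_mono fun x ⟨hxE, hxq⟩ => ⟨?_, hqt hxq⟩)
      exact Set.mem_symmDiff.2 (Or.inl ⟨hxE, hH hxq⟩)
  have hscale : ENNReal.ofReal (s ^ d) * (densityConst V * ENNReal.ofReal (ε ^ d))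
      = ENNReal.ofReal (t ^ d) * densityConst V := by
    rw [mul_pow, ENNReal.ofReal_mul (by positivity)]
    ring
  exact (hlow.trans_lt (hΔ.trans_eq hscale)).false

end Density

lemma hausdorffMeasure_null_of_dist_le_mul_dist {X Y : Type*} [MetricSpace X] [MeasurableSpace X]
    [BorelSpace X] [MetricSpace Y] [MeasurableSpace Y] [BorelSpace Y] {f : X → Y} {s : Set X}
    {C : ℝ≥0} {d : ℝ} (hd : 0 ≤ d) (hf : ∀ x ∈ s, ∀ y ∈ s, dist x y ≤ C * dist (f x) (f y))
    (hs : μH[d] (f '' s) = 0) : μH[d] s = 0 := by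
  have hanti : AntilipschitzWith C (s.domRestrict f) :=
    AntilipschitzWith.of_le_mul_dist fun x y => hf x x.2 y y.2
  have hpre : (univ : Set s) = s.domRestrict f ⁻¹' (f '' s) := by
    ext x
    exact iff_of_true trivial (mem_image_of_mem f x.2)
  rw [← Subtype.range_coe (s := s), ← image_univ,
    isometry_subtype_coe.hausdorffMeasure_image (Or.inl hd), hpre]
  exact le_antisymm ((hanti.hausdorffMeasure_preimage_le hd _).trans_eq (by rw [hs, mul_zero]))
    zero_le

section Covering

variable {V : Type*} [NormedAddCommGroup V] [InnerProductSpace ℝ V] [MeasureSpace V]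

lemma isMTNormal_mtNormal {E : Set V} {p : V} (h : p ∈ redBdry E) :
    IsMTNormal E p (mtNormal E p) := by
  have h' : ∃ ν, IsMTNormal E p ν := h
  rw [mtNormal, dif_pos h']
  exact h'.choose_spec

def transversalPoints (E S : Set V) (e : V) (α ρ : ℝ) : Set V :=
  {q ∈ S | α ≤ |⟪mtNormal E q, e⟫| ∧ HasTwoSidedDensityBound E ρ q}

def conePiece (E S : Set V) (e : V) (α ρ δ : ℝ) : Set V :=
  {p ∈ transversalPoints E S e α ρ | ∀ q ∈ transversalPoints E S e α ρ, dist q p < δ →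
    |⟪q - p, mtNormal E p⟫| ≤ α / 2 * ‖q - p‖}

lemma norm_sub_le_of_mem_conePiece {E S : Set V} {e : V} {α ρ δ : ℝ} (hS : S ⊆ redBdry E)
    (he : ‖e‖ = 1) (hα : 0 < α) {x p q : V} (hp : p ∈ conePiece E S e α ρ δ ∩ ball x (δ / 2))
    (hq : q ∈ conePiece E S e α ρ δ ∩ ball x (δ / 2)) :
    ‖q - p‖ ≤ (2 + 2 / α) * ‖(q - p) - ⟪q - p, e⟫ • e‖ := by
  have hqp : dist q p < δ := by
    linarith [dist_triangle_right q p x, mem_ball.1 hp.2, mem_ball.1 hq.2]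
  exact norm_le_of_abs_inner_le he (isMTNormal_mtNormal (hS hp.1.1.1)).1 hα hp.1.1.2.1
    (hp.1.2 q hq.1.1 hqp)

variable [FiniteDimensional ℝ V] [BorelSpace V] [(volume : Measure V).IsAddHaarMeasure]

lemma subset_iUnion_conePiece {E S : Set V} {e : V} (hS : S ⊆ redBdry E)
    (he : ∀ p ∈ S, ⟪mtNormal E p, e⟫ ≠ 0) :
    S ⊆ ⋃ (k : ℕ) (m : ℕ) (j : ℕ) (i : ℕ),
      conePiece E S e ((k : ℝ) + 1)⁻¹ ((m : ℝ) + 1)⁻¹ ((j : ℝ) + 1)⁻¹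
        ∩ ball (TopologicalSpace.denseSeq V i) (((j : ℝ) + 1)⁻¹ / 2) := by
  intro p hp
  have hν := isMTNormal_mtNormal (hS hp)
  obtain ⟨k, hk⟩ := exists_nat_one_div_lt (abs_pos.2 (he p hp))
  obtain ⟨ρ, hρ, hpρ⟩ := hν.exists_hasTwoSidedDensityBound
  obtain ⟨m, hm⟩ := exists_nat_one_div_lt hρ
  rw [one_div] at hk hm
  have hα : 0 < ((k : ℝ) + 1)⁻¹ := by positivity
  have hα1 : ((k : ℝ) + 1)⁻¹ / 2 ≤ 1 := by
    have : ((k : ℝ) + 1)⁻¹ ≤ 1 := inv_le_one_of_one_le₀ (by linarith [k.cast_nonneg (α := ℝ)])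
    linarith
  obtain ⟨δ, hδ, hcone⟩ := hν.exists_abs_inner_le (by positivity : 0 < ((m : ℝ) + 1)⁻¹)
    (half_pos hα) hα1
  obtain ⟨j, hj⟩ := exists_nat_one_div_lt hδ
  rw [one_div] at hj
  obtain ⟨i, hi⟩ := (TopologicalSpace.denseRange_denseSeq V).exists_dist_lt p
    (by positivity : 0 < ((j : ℝ) + 1)⁻¹ / 2)
  simp only [mem_iUnion]
  refine ⟨k, m, j, i, ⟨⟨hp, hk.le, hpρ.mono hm.le⟩, fun q hq hqp => ?_⟩, mem_ball.2 hi⟩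
  exact hcone q hq.2.2 (hqp.trans hj)

end Covering

section VerticalProjection

variable {n : ℕ}

lemma vcons_hproj_vert (p : Rn (n + 1)) : vcons (hproj p) (vert p) = p := by
  ext i
  show Fin.snoc (α := fun _ => ℝ) (EuclideanSpace.equiv (Fin n) ℝ (hproj p)) (vert p) i = p i
  induction i using Fin.lastCases with
  | last => simp [Fin.snoc_last, vert]
  | cast i =>
      rw [Fin.snoc_castSucc]
      rfl

lemma hproj_sub (p q : Rn (n + 1)) : hproj (p - q) = hproj p - hproj q := rfl

lemma norm_eVert : ‖eVert n‖ = 1 := by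
  simp [eVert]

lemma norm_sub_inner_eVert_smul (u : Rn (n + 1)) :
    ‖u - ⟪u, eVert n⟫ • eVert n‖ = ‖hproj u‖ := by
  have hinner : ⟪u, eVert n⟫ = u (Fin.last n) := by simp [eVert, EuclideanSpace.inner_single_right]
  rw [EuclideanSpace.norm_eq, EuclideanSpace.norm_eq, hinner, Fin.sum_univ_castSucc]
  simp [eVert, hproj]

theorem hausdorffMeasure_null_of_hproj_image_null {E S : Set (Rn (n + 1))} (hS : S ⊆ redBdry E)
    (hν : ∀ p ∈ S, ⟪mtNormal E p, eVert n⟫ ≠ 0) (hS_proj : μH[(n : ℝ)] (hproj '' S) = 0) :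
    μH[(n : ℝ)] S = 0 := by
  refine measure_mono_null (subset_iUnion_conePiece hS hν) (measure_iUnion_null fun k =>
    measure_iUnion_null fun m => measure_iUnion_null fun j => measure_iUnion_null fun i => ?_)
  have hα : 0 < ((k : ℝ) + 1)⁻¹ := by positivity
  refine hausdorffMeasure_null_of_dist_le_mul_dist (C := (2 + 2 / ((k : ℝ) + 1)⁻¹).toNNReal)
    n.cast_nonneg (fun p hp q hq => ?_)
    (measure_mono_null (image_mono fun p hp => hp.1.1.1) hS_proj)
  rw [Real.coe_toNNReal _ (by positivity), dist_eq_norm, dist_eq_norm, ← hproj_sub,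
    ← norm_sub_inner_eVert_smul]
  exact norm_sub_le_of_mem_conePiece hS norm_eVert hα hq hp

end VerticalProjection

theorem null_vertical_projection_of_interface_general
    (n : ℕ) (X : Cluster (n + 1) 1 2)
    (F : Set (Rn n))
    (hnormal : ∀ x ∈ F, ∀ t ∈ vslice (redBdry (X.X 1)) x,
      (inner ℝ (mtNormal (X.X 1) (vcons x t)) (eVert n) : ℝ) ≠ 0)
    (G : Set (Rn n)) (hGF : G ⊆ F)
    (hGnull : μH[(n : ℝ)] G = 0) :
    μH[(n : ℝ)] (X.interface 1 2 ∩ {p : Rn (n + 1) | hproj p ∈ G}) = 0 := by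
  refine hausdorffMeasure_null_of_hproj_image_null (fun p hp => hp.1.1) (fun p hp => ?_)
    (measure_mono_null (image_subset_iff.2 fun p hp => hp.2) hGnull)
  have hp' : vert p ∈ vslice (redBdry (X.X 1)) (hproj p) := by
    rw [vslice, mem_ofPred_eq, vcons_hproj_vert]
    exact hp.1.1
  simpa only [vcons_hproj_vert] using hnormal _ (hGF hp.2) _ hp'

/-- **Null vertical projections of the interface** (Lemma 5.2, step two): let `X` be a
`(1,2)`-cluster in `ℝ^{n+1} = ℝ^n × ℝ`, and let `F ⊆ ℝ^n` be a Borel set of full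
`H^n`-measure along which the slicing properties hold — in particular
`ν_{X(2)}(x̄,t)·e_{n+1} ≠ 0` for every `x̄ ∈ F` and `t ∈ [∂*X(2)]_x̄`. Then for every
Borel `G ⊆ F` with `H^n(G) = 0` one has `H^n(X(2,3) ∩ (G × ℝ)) = 0`. -/
theorem null_vertical_projection_of_interface
    (n : ℕ) (X : Cluster (n + 1) 1 2)
    (F : Set (Rn n)) (hF : MeasurableSet F)
    (hFfull : μH[(n : ℝ)] ((univ : Set (Rn n)) \ F) = 0)
    (hsliceperim : ∀ x ∈ F, ∀ j, HasLocFinPerimD 0 (vslice (X.X j) x))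
    (hsliceint : ∀ x ∈ F, ∀ j k : Fin (1 + 2), j < k →
      vslice (X.interface j k) x = redBdry (vslice (X.X j) x) ∩ redBdry (vslice (X.X k) x))
    (hnormal : ∀ x ∈ F, ∀ t ∈ vslice (redBdry (X.X 1)) x,
      (inner ℝ (mtNormal (X.X 1) (vcons x t)) (eVert n) : ℝ) ≠ 0)
    (G : Set (Rn n)) (hG : MeasurableSet G) (hGF : G ⊆ F)
    (hGnull : μH[(n : ℝ)] G = 0) :
    μH[(n : ℝ)] (X.interface 1 2 ∩ {p : Rn (n + 1) | hproj p ∈ G}) = 0 :=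
  null_vertical_projection_of_interface_general n X F hnormal G hGF hGnull
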